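/- Let u₀ ∈ L¹(Ω) and let X_{t₀,u₀} = {w ∈ X_{t₀} : w(·,0)|_Ω = u₀}. If t₀ > 0 satisfies M(μ(Ω) + μ(F′)) · t₀ < 1, then 𝔗 maps X_{t₀,u₀} into X_{t₀,u₀} and is a strict contraction on X_{t₀,u₀} (with contraction constant M(μ(Ω) + μ(F′)) t₀ < 1 for the norm |||·|||); consequently 𝔗 has a unique fixed point in X_{t₀,u₀}. -/

import Mathlib

/-!
Picard iteration. Since `K ≤ M` vanishes off `Ω × F'`, the nonlocal term of a slice
`f = w(·, r)` satisfies `|∫ K(x,y) (f y - f x) dy| ≤ M (‖f‖_{L¹(F')} + μ(F') |f x|)`; integrating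
over `Ω` and, by Tonelli, in time bounds `∫_Ω |𝔗w(t) - 𝔗w(s)|` by `|t - s|` times a constant, so
`𝔗 w` is again `L¹`-continuous. Applied to `w - v`, which vanishes off `Ω` (so its `L¹(F')`-norm is
at most its `L¹(Ω)`-norm), the same bound is the contraction estimate with constant
`M (μ(Ω) + μ(F')) t₀`. The iterates `𝔗ⁿ w₀` then have geometrically small increments, hence for
each `t` converge a.e. on `Ω`; their pointwise `liminf` is a jointly measurable limit that lies in
`X_{t₀,u₀}` and is a fixed point, unique by the contraction estimate.
-/

open MeasureTheory Set

attribute [local instance] Classical.propDecidable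

/-- The nonlocal fixed-point operator `𝔗`. -/
noncomputable def nonlocalT {G : Type*} [MeasurableSpace G] (μ : Measure G) (Ω : Set G)
    (K : G → G → ℝ) (g : G → ℝ → ℝ) (w : G → ℝ → ℝ) : G → ℝ → ℝ :=
  fun x t =>
    if x ∈ Ω then w x 0 + ∫ r in (0:ℝ)..t, ∫ y, K x y * (w y r - w x r) ∂μ
    else g x t

/-- Membership in the space `X_{t₀}`: measurable, equal to the boundary datum `g`
off `Ω`, and `t ↦ w(·,t)|_Ω` continuous from `[0,t₀]` into `L¹(Ω,μ)`. -/
def MemX {G : Type*} [MeasurableSpace G] (μ : Measure G) (Ω : Set G)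
    (g : G → ℝ → ℝ) (t₀ : ℝ) (w : G → ℝ → ℝ) : Prop :=
  Measurable (fun p : G × ℝ => w p.1 p.2) ∧
  (∀ x ∉ Ω, ∀ t ∈ Icc (0:ℝ) t₀, w x t = g x t) ∧
  (∀ t ∈ Icc (0:ℝ) t₀, IntegrableOn (fun x => w x t) Ω μ) ∧
  (∀ s ∈ Icc (0:ℝ) t₀,
    Filter.Tendsto (fun t => ∫ x in Ω, |w x t - w x s| ∂μ)
      (nhdsWithin s (Icc (0:ℝ) t₀)) (nhds 0))

/-- Membership in `X_{t₀,u₀} = {w ∈ X_{t₀} : w(·,0)|_Ω = u₀}` (equality in `L¹(Ω)`). -/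
def MemX0 {G : Type*} [MeasurableSpace G] (μ : Measure G) (Ω : Set G)
    (g : G → ℝ → ℝ) (t₀ : ℝ) (u₀ : G → ℝ) (w : G → ℝ → ℝ) : Prop :=
  MemX μ Ω g t₀ w ∧ (fun x => w x 0) =ᵐ[μ.restrict Ω] u₀

/-- The norm `|||w||| = max_{0 ≤ t ≤ t₀} ‖w(·,t)‖_{L¹(Ω)}`. -/
noncomputable def tripleNorm {G : Type*} [MeasurableSpace G] (μ : Measure G) (Ω : Set G)
    (t₀ : ℝ) (w : G → ℝ → ℝ) : ℝ :=
  ⨆ t : Icc (0:ℝ) t₀, ∫ x in Ω, |w x (t : ℝ)| ∂μ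

open Filter Topology Function

open scoped Interval ENNReal

section TimeIntegral

variable {α : Type*} [MeasurableSpace α] {ν : Measure α} {f : α → ℝ → ℝ}

theorem Measurable.intervalIntegral_uncurry (hf : Measurable (uncurry f)) (a : ℝ) :
    Measurable fun p : α × ℝ => ∫ r in a..p.2, f p.1 r := by
  have hset : MeasurableSet {q : (α × ℝ) × ℝ | q.2 ∈ Ι a q.1.2} :=
    (measurableSet_lt (measurable_const.min measurable_fst.snd) measurable_snd).inter
      (measurableSet_le measurable_snd (measurable_const.max measurable_fst.snd))
  have hind : Measurable fun p : α × ℝ => ∫ r in Ι a p.2, f p.1 r := by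
    have := ((hf.comp (measurable_fst.fst.prodMk measurable_snd)).indicator
      hset).stronglyMeasurable.integral_prod_right' (ν := volume)
    convert this.measurable using 2 with p
    rw [← integral_indicator measurableSet_uIoc]
    rfl
  simp_rw [intervalIntegral.intervalIntegral_eq_integral_uIoc]
  exact (Measurable.ite (measurableSet_le measurable_const measurable_snd)
    (measurable_const (a := (1 : ℝ))) measurable_const).smul hind

variable [SFinite ν] {a b B : ℝ}

theorem integrable_uncurry_of_integral_abs_le (hf : Measurable (uncurry f))
    (hint : ∀ r ∈ Ioc a b, Integrable (f · r) ν) (hB : ∀ r ∈ Ioc a b, ∫ x, |f x r| ∂ν ≤ B) :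
    Integrable (uncurry f) (ν.prod (volume.restrict (Ioc a b))) := by
  rw [integrable_prod_iff' hf.aestronglyMeasurable]
  refine ⟨(ae_restrict_iff' measurableSet_Ioc).2 (ae_of_all _ hint), ?_⟩
  refine Measure.integrableOn_of_bounded (M := B) (by simp) ?_ ?_
  · exact (hf.norm.stronglyMeasurable.integral_prod_left' (μ := ν)).aestronglyMeasurable
  · filter_upwards [ae_restrict_mem measurableSet_Ioc] with r hr
    rw [Real.norm_of_nonneg (integral_nonneg fun _ => norm_nonneg _)]
    exact hB r hr

theorem ae_integrableOn_of_integral_abs_le (hf : Measurable (uncurry f))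
    (hint : ∀ r ∈ Ioc a b, Integrable (f · r) ν) (hB : ∀ r ∈ Ioc a b, ∫ x, |f x r| ∂ν ≤ B) :
    ∀ᵐ x ∂ν, IntegrableOn (f x) (Ioc a b) :=
  (integrable_uncurry_of_integral_abs_le hf hint hB).prod_right_ae

theorem integral_abs_intervalIntegral_le (hf : Measurable (uncurry f)) (hab : a ≤ b)
    (hint : ∀ r ∈ Ioc a b, Integrable (f · r) ν) (hB : ∀ r ∈ Ioc a b, ∫ x, |f x r| ∂ν ≤ B) :
    Integrable (fun x => ∫ r in a..b, f x r) ν ∧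
      ∫ x, |∫ r in a..b, f x r| ∂ν ≤ (b - a) * B := by
  have hprod := integrable_uncurry_of_integral_abs_le hf hint hB
  simp_rw [intervalIntegral.integral_of_le hab]
  refine ⟨hprod.integral_prod_left, ?_⟩
  calc ∫ x, |∫ r in Ioc a b, f x r| ∂ν
      ≤ ∫ x, (∫ r in Ioc a b, |f x r|) ∂ν :=
        integral_mono hprod.integral_prod_left.abs hprod.norm.integral_prod_left
          fun x => abs_integral_le_integral_abs
    _ = ∫ r in Ioc a b, (∫ x, |f x r| ∂ν) := integral_integral_swap hprod.norm
    _ ≤ ∫ _ in Ioc a b, B := setIntegral_mono_on hprod.norm.integral_prod_right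
        (integrableOn_const (by simp)) measurableSet_Ioc hB
    _ = (b - a) * B := by simp [hab]

end TimeIntegral

section L1Estimates

variable {α : Type*} [MeasurableSpace α] {ν : Measure α}

theorem integral_abs_sub_le_add {a b c : α → ℝ} (ha : Integrable a ν) (hb : Integrable b ν)
    (hc : Integrable c ν) : ∫ x, |a x - c x| ∂ν ≤ ∫ x, |a x - b x| ∂ν + ∫ x, |b x - c x| ∂ν :=
  calc ∫ x, |a x - c x| ∂ν ≤ ∫ x, (|a x - b x| + |b x - c x|) ∂ν :=
        integral_mono (ha.sub hc).abs ((ha.sub hb).abs.add (hb.sub hc).abs)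
          fun x => abs_sub_le (a x) (b x) (c x)
    _ = _ := integral_add (ha.sub hb).abs (hb.sub hc).abs

theorem ae_eq_of_integral_abs_sub_nonpos {a b : α → ℝ} (ha : Integrable a ν)
    (hb : Integrable b ν) (h : ∫ x, |a x - b x| ∂ν ≤ 0) : a =ᵐ[ν] b := by
  have := (integral_eq_zero_iff_of_nonneg (fun _ => abs_nonneg _) (ha.sub hb).abs).1
    (le_antisymm h (integral_nonneg fun _ => abs_nonneg _))
  filter_upwards [this] with x hx
  exact sub_eq_zero.1 (abs_eq_zero.1 hx)

theorem lintegral_edist_eq_ofReal_integral_abs_sub {a b : α → ℝ} (ha : Integrable a ν)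
    (hb : Integrable b ν) :
    ∫⁻ x, edist (a x) (b x) ∂ν = ENNReal.ofReal (∫ x, |a x - b x| ∂ν) := by
  rw [ofReal_integral_eq_lintegral_ofReal (f := fun x => |a x - b x|) (ha.sub hb).abs
    (ae_of_all _ fun _ => abs_nonneg _)]
  simp_rw [edist_dist, Real.dist_eq]

theorem integrable_and_integral_abs_sub_le_of_lintegral_edist_le {a b : α → ℝ}
    (ha : AEStronglyMeasurable a ν) (hb : Integrable b ν) {c : ℝ} (hc : 0 ≤ c)
    (hle : ∫⁻ x, edist (a x) (b x) ∂ν ≤ ENNReal.ofReal c) :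
    Integrable a ν ∧ ∫ x, |a x - b x| ∂ν ≤ c := by
  have hab : Integrable (fun x => a x - b x) ν :=
    ⟨ha.sub hb.1, by
      simpa only [HasFiniteIntegral, ← edist_eq_enorm_sub] using
        (hle.trans_lt ENNReal.ofReal_lt_top)⟩
  have ha' : Integrable a ν := (hab.add hb).congr (ae_of_all _ fun x => sub_add_cancel _ _)
  refine ⟨ha', (ENNReal.ofReal_le_ofReal_iff hc).1 ?_⟩
  rwa [← lintegral_edist_eq_ofReal_integral_abs_sub ha' hb]

theorem lintegral_edist_liminf_le {f : ℕ → α → ℝ} (hf : ∀ n, Measurable (f n)) {ε : ℕ → ℝ≥0∞}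
    (hε : ∑' n, ε n ≠ ∞) (hΔ : ∀ n, ∫⁻ x, edist (f n x) (f (n + 1) x) ∂ν ≤ ε n) (n : ℕ) :
    ∫⁻ x, edist (f n x) (liminf (fun m => f m x) atTop) ∂ν ≤ ∑' m, ε (n + m) := by
  set d : α → ℕ → ℝ≥0∞ := fun x m => edist (f m x) (f (m + 1) x)
  have hd : ∀ m, Measurable fun x => d x m := fun m => (hf m).edist (hf (m + 1))
  have hfin : ∀ᵐ x ∂ν, ∑' m, d x m ≠ ∞ := by
    have : ∫⁻ x, ∑' m, d x m ∂ν ≠ ∞ := by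
      rw [lintegral_tsum fun m => (hd m).aemeasurable]
      exact ne_top_of_le_ne_top hε (ENNReal.tsum_le_tsum hΔ)
    filter_upwards [ae_lt_top' (AEMeasurable.tsum fun m => (hd m).aemeasurable) this]
      with x hx using hx.ne
  calc ∫⁻ x, edist (f n x) (liminf (fun m => f m x) atTop) ∂ν
      ≤ ∫⁻ x, ∑' m, d x (n + m) ∂ν := by
        refine lintegral_mono_ae ?_
        filter_upwards [hfin] with x hx
        obtain ⟨a, ha⟩ := cauchySeq_tendsto_of_complete
          (cauchySeq_of_edist_le_of_tsum_ne_top (d x) (fun m => le_rfl) hx)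
        rw [ha.liminf_eq]
        exact edist_le_tsum_of_edist_le_of_tendsto (d x) (fun m => le_rfl) ha n
    _ = ∑' m, ∫⁻ x, d x (n + m) ∂ν := lintegral_tsum fun m => (hd _).aemeasurable
    _ ≤ ∑' m, ε (n + m) := ENNReal.tsum_le_tsum fun m => hΔ _

theorem tsum_ofReal_geometric_tail {q D : ℝ} (hq0 : 0 ≤ q) (hq1 : q < 1) (hD : 0 ≤ D) (n : ℕ) :
    ∑' m, ENNReal.ofReal (q ^ (n + m) * D) = ENNReal.ofReal (q ^ n * (D / (1 - q))) := by
  have h := (hasSum_geometric_of_lt_one hq0 hq1).mul_left (q ^ n * D)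
  rw [← div_eq_mul_inv, mul_div_assoc,
    show (fun m => q ^ n * D * q ^ m) = fun m => q ^ (n + m) * D from funext fun m => by ring] at h
  rw [← ENNReal.ofReal_tsum_of_nonneg (fun m => by positivity) h.summable, h.tsum_eq]

theorem integrable_liminf_and_integral_abs_sub_le {f : ℕ → α → ℝ} (hf : ∀ n, Measurable (f n))
    (hint : ∀ n, Integrable (f n) ν) {q D : ℝ} (hq0 : 0 ≤ q) (hq1 : q < 1) (hD : 0 ≤ D)
    (hΔ : ∀ n, ∫ x, |f (n + 1) x - f n x| ∂ν ≤ q ^ n * D) (n : ℕ) :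
    Integrable (fun x => liminf (fun m => f m x) atTop) ν ∧
      ∫ x, |liminf (fun m => f m x) atTop - f n x| ∂ν ≤ q ^ n * (D / (1 - q)) := by
  have hfin : ∑' m, ENNReal.ofReal (q ^ m * D) ≠ ∞ := by
    simpa using ((tsum_ofReal_geometric_tail hq0 hq1 hD 0).trans_lt ENNReal.ofReal_lt_top).ne
  have hΔ' : ∀ m, ∫⁻ x, edist (f m x) (f (m + 1) x) ∂ν ≤ ENNReal.ofReal (q ^ m * D) := by
    intro m
    simp_rw [edist_comm (f m _)]
    rw [lintegral_edist_eq_ofReal_integral_abs_sub (hint (m + 1)) (hint m)]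
    exact ENNReal.ofReal_le_ofReal (hΔ m)
  have hlim := lintegral_edist_liminf_le hf hfin hΔ' n
  refine integrable_and_integral_abs_sub_le_of_lintegral_edist_le
    (Measurable.liminf hf).aestronglyMeasurable (hint n)
    (by have := sub_pos.2 hq1; positivity) ?_
  simp_rw [edist_comm _ (f n _)]
  exact hlim.trans (tsum_ofReal_geometric_tail hq0 hq1 hD n).le

theorem integrableOn_and_integral_abs_le_of_abs_le_compl {f : α → ℝ} {s t : Set α}
    (hs : MeasurableSet s) (ht : ν t < ∞) (hf : Measurable f) (hfs : IntegrableOn f s ν) {C : ℝ}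
    (hC : 0 ≤ C) (hcompl : ∀ x ∉ s, |f x| ≤ C) :
    IntegrableOn f t ν ∧ ∫ x in t, |f x| ∂ν ≤ ∫ x in s, |f x| ∂ν + C * ν.real t := by
  have hind : Integrable (s.indicator fun x => |f x|) ν :=
    (integrable_indicator_iff hs).2 hfs.abs
  have hdom : IntegrableOn (fun x => s.indicator (fun x => |f x|) x + C) t ν :=
    hind.integrableOn.add (integrableOn_const ht.ne)
  have hpt : ∀ x, |f x| ≤ s.indicator (fun x => |f x|) x + C := fun x => by
    by_cases hx : x ∈ s
    · simpa [hx] using hC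
    · simpa [hx] using hcompl x hx
  have hint : IntegrableOn f t ν :=
    hdom.mono' hf.aestronglyMeasurable (ae_of_all _ fun x => by simpa using hpt x)
  refine ⟨hint, ?_⟩
  calc ∫ x in t, |f x| ∂ν ≤ ∫ x in t, (s.indicator (fun x => |f x|) x + C) ∂ν :=
        integral_mono hint.abs hdom hpt
    _ = ∫ x in t, s.indicator (fun x => |f x|) x ∂ν + C * ν.real t := by
        rw [integral_add hind.integrableOn (integrableOn_const ht.ne), setIntegral_const,
          smul_eq_mul, mul_comm]
    _ ≤ ∫ x, s.indicator (fun x => |f x|) x ∂ν + C * ν.real t :=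
        add_le_add_left (setIntegral_le_integral hind
          (ae_of_all _ fun x => indicator_nonneg (fun _ _ => abs_nonneg _) x)) _
    _ = ∫ x in s, |f x| ∂ν + C * ν.real t := by rw [integral_indicator hs]

end L1Estimates

section NonlocalProblem

variable {G : Type*} [MeasurableSpace G] {μ : Measure G} {Ω F' : Set G} {I : Set ℝ}
  {K : G → G → ℝ} {M : ℝ} {f h : G → ℝ} {g w v : G → ℝ → ℝ} {t₀ C S : ℝ} {u₀ : G → ℝ}

def L1ContinuousOn (μ : Measure G) (Ω : Set G) (I : Set ℝ) (w : G → ℝ → ℝ) : Prop :=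
  (∀ t ∈ I, IntegrableOn (w · t) Ω μ) ∧
    ∀ s ∈ I, Tendsto (fun t => ∫ x in Ω, |w x t - w x s| ∂μ) (𝓝[I] s) (𝓝 0)

theorem MemX.l1ContinuousOn (hw : MemX μ Ω g t₀ w) :
    L1ContinuousOn μ Ω (Icc 0 t₀) w :=
  hw.2.2

theorem L1ContinuousOn.sub (hw : L1ContinuousOn μ Ω I w) (hv : L1ContinuousOn μ Ω I v) :
    L1ContinuousOn μ Ω I (fun x t => w x t - v x t) := by
  refine ⟨fun t ht => (hw.1 t ht).sub (hv.1 t ht), fun s hs => ?_⟩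
  refine squeeze_zero' (Eventually.of_forall fun t => integral_nonneg fun _ => abs_nonneg _) ?_
    (by simpa using (hw.2 s hs).add (hv.2 s hs))
  filter_upwards [self_mem_nhdsWithin] with t ht
  have hw' := (hw.1 t ht).sub (hw.1 s hs)
  have hv' := (hv.1 t ht).sub (hv.1 s hs)
  calc ∫ x in Ω, |w x t - v x t - (w x s - v x s)| ∂μ
      ≤ ∫ x in Ω, (|w x t - w x s| + |v x t - v x s|) ∂μ :=
        integral_mono (((hw.1 t ht).sub (hv.1 t ht)).sub ((hw.1 s hs).sub (hv.1 s hs))).abs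
          (hw'.abs.add hv'.abs) fun x => by
          simpa only [sub_sub_sub_comm] using abs_sub (w x t - w x s) (v x t - v x s)
    _ = _ := integral_add hw'.abs hv'.abs

theorem L1ContinuousOn.continuousOn_integral_abs (hw : L1ContinuousOn μ Ω I w) :
    ContinuousOn (fun t => ∫ x in Ω, |w x t| ∂μ) I := by
  intro s hs
  rw [ContinuousWithinAt, tendsto_iff_norm_sub_tendsto_zero]
  refine squeeze_zero_norm' ?_ (hw.2 s hs)
  filter_upwards [self_mem_nhdsWithin] with t ht
  rw [norm_norm, Real.norm_eq_abs, ← integral_sub (hw.1 t ht).abs (hw.1 s hs).abs]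
  exact (abs_integral_le_integral_abs).trans <| integral_mono
    ((hw.1 t ht).abs.sub (hw.1 s hs).abs).abs ((hw.1 t ht).sub (hw.1 s hs)).abs
    fun x => abs_abs_sub_abs_le_abs_sub _ _

theorem L1ContinuousOn.of_tendsto {u : G → ℝ → ℝ} {z : ℕ → G → ℝ → ℝ} {τ : ℕ → ℝ}
    (hz : ∀ n, L1ContinuousOn μ Ω I (z n)) (hu : ∀ t ∈ I, IntegrableOn (u · t) Ω μ)
    (hτ : Tendsto τ atTop (𝓝 0))
    (happrox : ∀ n, ∀ t ∈ I, ∫ x in Ω, |u x t - z n x t| ∂μ ≤ τ n) :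
    L1ContinuousOn μ Ω I u := by
  refine ⟨hu, fun s hs => Metric.tendsto_nhds.2 fun ε hε => ?_⟩
  obtain ⟨n, hn⟩ := (hτ.eventually (gt_mem_nhds (by positivity : 0 < ε / 3))).exists
  filter_upwards [self_mem_nhdsWithin, (hz n).2 s hs |>.eventually (gt_mem_nhds
    (by positivity : 0 < ε / 3))] with t ht hzt
  have hzt' := (hz n).1 t ht
  have hzs := (hz n).1 s hs
  have h₁ := integral_abs_sub_le_add (hu t ht) hzt' (hu s hs)
  have h₂ := integral_abs_sub_le_add hzt' hzs (hu s hs)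
  have h₃ : ∫ x in Ω, |z n x s - u x s| ∂μ ≤ τ n := by
    simpa only [abs_sub_comm] using happrox n s hs
  rw [Real.dist_eq, sub_zero, abs_of_nonneg (integral_nonneg fun _ => abs_nonneg _)]
  linarith [happrox n t ht]

theorem L1ContinuousOn.integral_abs_le_tripleNorm (hw : L1ContinuousOn μ Ω (Icc 0 t₀) w)
    {t : ℝ} (ht : t ∈ Icc 0 t₀) : ∫ x in Ω, |w x t| ∂μ ≤ tripleNorm μ Ω t₀ w := by
  have hbdd := isCompact_Icc.bddAbove_image hw.continuousOn_integral_abs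
  rw [image_eq_range] at hbdd
  exact le_ciSup hbdd ⟨t, ht⟩

theorem L1ContinuousOn.tripleNorm_nonneg (hw : L1ContinuousOn μ Ω (Icc 0 t₀) w)
    (ht₀ : 0 ≤ t₀) : 0 ≤ tripleNorm μ Ω t₀ w :=
  (integral_nonneg fun _ => abs_nonneg _).trans
    (hw.integral_abs_le_tripleNorm (left_mem_Icc.2 ht₀))

theorem tripleNorm_le (ht₀ : 0 ≤ t₀) {S : ℝ} (h : ∀ t ∈ Icc 0 t₀, ∫ x in Ω, |w x t| ∂μ ≤ S) :
    tripleNorm μ Ω t₀ w ≤ S :=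
  have : Nonempty (Icc 0 t₀) := ⟨⟨0, left_mem_Icc.2 ht₀⟩⟩
  ciSup_le fun t => h t t.2

structure SliceBound (μ : Measure G) (Ω : Set G) (t₀ C S : ℝ) (w : G → ℝ → ℝ) : Prop where
  measurable : Measurable (uncurry w)
  nonneg : 0 ≤ C
  abs_le_of_notMem : ∀ x ∉ Ω, ∀ t ∈ Icc 0 t₀, |w x t| ≤ C
  integrableOn : ∀ t ∈ Icc 0 t₀, IntegrableOn (w · t) Ω μ
  integral_abs_le : ∀ t ∈ Icc 0 t₀, ∫ x in Ω, |w x t| ∂μ ≤ S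

theorem SliceBound.measurable_slice (hw : SliceBound μ Ω t₀ C S w) (t : ℝ) :
    Measurable (w · t) :=
  hw.measurable.comp (measurable_id.prodMk measurable_const)

theorem MemX.sliceBound (hw : MemX μ Ω g t₀ w) (hC : 0 ≤ C) (hg : ∀ x t, |g x t| ≤ C) :
    SliceBound μ Ω t₀ C (tripleNorm μ Ω t₀ w) w where
  measurable := hw.1
  nonneg := hC
  abs_le_of_notMem x hx t ht := hw.2.1 x hx t ht ▸ hg x t
  integrableOn := hw.l1ContinuousOn.1
  integral_abs_le _ := hw.l1ContinuousOn.integral_abs_le_tripleNorm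

theorem MemX.sliceBound_sub (hw : MemX μ Ω g t₀ w) (hv : MemX μ Ω g t₀ v) :
    SliceBound μ Ω t₀ 0 (tripleNorm μ Ω t₀ fun x t => w x t - v x t)
      fun x t => w x t - v x t where
  measurable := hw.1.sub hv.1
  nonneg := le_rfl
  abs_le_of_notMem x hx t ht := by rw [hw.2.1 x hx t ht, hv.2.1 x hx t ht, sub_self, abs_zero]
  integrableOn := (hw.l1ContinuousOn.sub hv.l1ContinuousOn).1
  integral_abs_le _ := (hw.l1ContinuousOn.sub hv.l1ContinuousOn).integral_abs_le_tripleNorm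

theorem exists_memX0 (hΩ : MeasurableSet Ω) (hg : Measurable (uncurry g))
    (hu₀ : IntegrableOn u₀ Ω μ) : ∃ w, MemX0 μ Ω g t₀ u₀ w := by
  set v := hu₀.1.mk u₀
  refine ⟨fun x t => if x ∈ Ω then v x else g x t,
    ⟨?_, fun x hx t _ => if_neg hx, fun t _ => ?_, fun s _ => ?_⟩, ?_⟩
  · exact Measurable.ite (measurable_fst hΩ)
      (hu₀.1.stronglyMeasurable_mk.measurable.comp measurable_fst) hg
  · have hv : IntegrableOn v Ω μ := hu₀.congr hu₀.1.ae_eq_mk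
    exact hv.congr_fun (fun x hx => (if_pos hx).symm) hΩ
  · refine tendsto_const_nhds.congr fun t => ?_
    rw [setIntegral_congr_fun (g := fun _ => 0) hΩ fun x hx => by
      simp only [if_pos hx, sub_self, abs_zero], integral_zero]
  · filter_upwards [ae_restrict_mem hΩ, hu₀.1.ae_eq_mk] with x hx hx'
    exact (if_pos hx).trans hx'.symm

theorem exists_memX0_tendsto_of_geometric (hΩ : MeasurableSet Ω) (hg : Measurable (uncurry g))
    (hu₀ : IntegrableOn u₀ Ω μ) (ht₀ : 0 ≤ t₀) {ws : ℕ → G → ℝ → ℝ}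
    (hws : ∀ n, MemX0 μ Ω g t₀ u₀ (ws n)) {q D : ℝ} (hq0 : 0 ≤ q) (hq1 : q < 1) (hD : 0 ≤ D)
    (hΔ : ∀ n, ∀ t ∈ Icc 0 t₀, ∫ x in Ω, |ws (n + 1) x t - ws n x t| ∂μ ≤ q ^ n * D) :
    ∃ u, MemX0 μ Ω g t₀ u₀ u ∧ ∃ τ : ℕ → ℝ, Tendsto τ atTop (𝓝 0) ∧
      ∀ n, ∀ t ∈ Icc 0 t₀, ∫ x in Ω, |u x t - ws n x t| ∂μ ≤ τ n := by
  set u : G → ℝ → ℝ := fun x t =>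
    if x ∈ Ω then liminf (fun n => ws n x t) atTop else g x t
  have hu : Measurable (uncurry u) :=
    Measurable.ite (measurable_fst hΩ) (Measurable.liminf fun n => (hws n).1.1) hg
  have happrox : ∀ n, ∀ t ∈ Icc 0 t₀, IntegrableOn (u · t) Ω μ ∧
      ∫ x in Ω, |u x t - ws n x t| ∂μ ≤ q ^ n * (D / (1 - q)) := by
    intro n t ht
    obtain ⟨hint, hle⟩ := integrable_liminf_and_integral_abs_sub_le (ν := μ.restrict Ω)
      (f := fun n x => ws n x t) (fun n => (hws n).1.1.comp (measurable_id.prodMk measurable_const))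
      (fun n => (hws n).1.l1ContinuousOn.1 t ht) hq0 hq1 hD (fun n => hΔ n t ht) n
    have hEq : ∀ x ∈ Ω, liminf (fun m => ws m x t) atTop = u x t := fun x hx => (if_pos hx).symm
    exact ⟨IntegrableOn.congr_fun hint hEq hΩ,
      (setIntegral_congr_fun hΩ fun x hx => by simp only [← hEq x hx]).trans_le hle⟩
  have hτ : Tendsto (fun n => q ^ n * (D / (1 - q))) atTop (𝓝 0) := by
    simpa using (tendsto_pow_atTop_nhds_zero_of_lt_one hq0 hq1).mul_const (D / (1 - q))
  have hX : MemX μ Ω g t₀ u := ⟨hu, fun x hx t _ => if_neg hx,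
    L1ContinuousOn.of_tendsto (fun n => (hws n).1.l1ContinuousOn)
      (fun t ht => (happrox 0 t ht).1) hτ fun n t ht => (happrox n t ht).2⟩
  refine ⟨u, ⟨hX, ?_⟩, _, hτ, fun n t ht => (happrox n t ht).2⟩
  have h0 : (0 : ℝ) ∈ Icc 0 t₀ := ⟨le_rfl, ht₀⟩
  refine ae_eq_of_integral_abs_sub_nonpos (happrox 0 0 h0).1 hu₀ (ge_of_tendsto' hτ fun n => ?_)
  have hws0 : ∫ x in Ω, |ws n x 0 - u₀ x| ∂μ = 0 :=
    integral_eq_zero_of_ae <| (hws n).2.mono fun x hx => by simp [hx]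
  linarith [integral_abs_sub_le_add (happrox 0 0 h0).1 ((hws n).1.l1ContinuousOn.1 0 h0) hu₀,
    (happrox n 0 h0).2]

structure IsNonlocalKernel (μ : Measure G) (Ω F' : Set G) (K : G → G → ℝ) (M : ℝ) : Prop where
  measurableSet_left : MeasurableSet Ω
  measurableSet_right : MeasurableSet F'
  measure_left_lt_top : μ Ω < ∞
  measure_right_lt_top : μ F' < ∞
  measurable : Measurable (uncurry K)
  nonneg : ∀ x y, 0 ≤ K x y
  le_bound : ∀ x y, K x y ≤ M
  bound_nonneg : 0 ≤ M
  eq_zero_of_notMem : ∀ x y, (x, y) ∉ Ω ×ˢ F' → K x y = 0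

noncomputable def nonlocalOp (μ : Measure G) (K : G → G → ℝ) (f : G → ℝ) (x : G) : ℝ :=
  ∫ y, K x y * (f y - f x) ∂μ

theorem nonlocalT_of_mem {x : G} (hx : x ∈ Ω) (t : ℝ) :
    nonlocalT μ Ω K g w x t = w x 0 + ∫ r in 0..t, nonlocalOp μ K (w · r) x :=
  if_pos hx

namespace IsNonlocalKernel

theorem eq_zero_of_notMem_right (H : IsNonlocalKernel μ Ω F' K M) (x : G) {y : G}
    (hy : y ∉ F') : K x y = 0 :=
  H.eq_zero_of_notMem x y fun hxy => hy (mem_prod.1 hxy).2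

theorem abs_mul_sub_le (H : IsNonlocalKernel μ Ω F' K M) (f : G → ℝ) (x y : G) :
    |K x y * (f y - f x)| ≤ F'.indicator (fun y => M * (|f y| + |f x|)) y := by
  by_cases hy : y ∈ F'
  · rw [indicator_of_mem hy, abs_mul, abs_of_nonneg (H.nonneg x y)]
    exact mul_le_mul (H.le_bound x y) (abs_sub _ _) (abs_nonneg _) H.bound_nonneg
  · simp [indicator_of_notMem hy, H.eq_zero_of_notMem_right x hy]

theorem integrable_mul_sub (H : IsNonlocalKernel μ Ω F' K M) (hf : Measurable f)
    (hfF' : IntegrableOn f F' μ) (x : G) : Integrable (fun y => K x y * (f y - f x)) μ :=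
  ((integrable_indicator_iff H.measurableSet_right).2
      ((hfF'.abs.add (integrableOn_const H.measure_right_lt_top.ne)).const_mul M)).mono'
    ((H.measurable.comp (measurable_const.prodMk measurable_id)).mul
      (hf.sub measurable_const)).aestronglyMeasurable
    (ae_of_all _ fun y => H.abs_mul_sub_le f x y)

theorem abs_nonlocalOp_le (H : IsNonlocalKernel μ Ω F' K M) (hfF' : IntegrableOn f F' μ)
    (x : G) : |nonlocalOp μ K f x| ≤ M * (∫ y in F', |f y| ∂μ + μ.real F' * |f x|) := by
  have hdom : IntegrableOn (fun y => M * (|f y| + |f x|)) F' μ :=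
    (hfF'.abs.add (integrableOn_const H.measure_right_lt_top.ne)).const_mul M
  calc |nonlocalOp μ K f x| ≤ ∫ y, |K x y * (f y - f x)| ∂μ := abs_integral_le_integral_abs
    _ ≤ ∫ y, F'.indicator (fun y => M * (|f y| + |f x|)) y ∂μ :=
        integral_mono_of_nonneg (ae_of_all _ fun _ => abs_nonneg _)
          ((integrable_indicator_iff H.measurableSet_right).2 hdom)
          (ae_of_all _ fun y => H.abs_mul_sub_le f x y)
    _ = M * (∫ y in F', |f y| ∂μ + μ.real F' * |f x|) := by
        rw [integral_indicator H.measurableSet_right, integral_const_mul,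
          integral_add hfF'.abs (integrableOn_const H.measure_right_lt_top.ne),
          setIntegral_const, smul_eq_mul]

theorem nonlocalOp_sub (H : IsNonlocalKernel μ Ω F' K M) (hf : Measurable f)
    (hfF' : IntegrableOn f F' μ) (hh : Measurable h) (hhF' : IntegrableOn h F' μ) (x : G) :
    nonlocalOp μ K f x - nonlocalOp μ K h x = nonlocalOp μ K (fun y => f y - h y) x := by
  rw [nonlocalOp, nonlocalOp, ← integral_sub (H.integrable_mul_sub hf hfF' x)
    (H.integrable_mul_sub hh hhF' x)]
  unfold nonlocalOp
  congr 1
  ext y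
  ring

theorem stronglyMeasurable_nonlocalOp (H : IsNonlocalKernel μ Ω F' K M)
    (hw : Measurable (uncurry w)) :
    StronglyMeasurable (uncurry fun x r => nonlocalOp μ K (w · r) x) := by
  have : IsFiniteMeasure (μ.restrict F') :=
    isFiniteMeasure_restrict.2 H.measure_right_lt_top.ne
  have hrestrict : (uncurry fun x r => nonlocalOp μ K (w · r) x) =
      fun p : G × ℝ => ∫ y in F', K p.1 y * (w y p.2 - w p.1 p.2) ∂μ := by
    ext p
    refine (setIntegral_eq_integral_of_forall_compl_eq_zero fun y hy => ?_).symm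
    rw [H.eq_zero_of_notMem_right p.1 hy, zero_mul]
  rw [hrestrict]
  refine StronglyMeasurable.integral_prod_right' (f := fun q : (G × ℝ) × G =>
    K q.1.1 q.2 * (w q.2 q.1.2 - w q.1.1 q.1.2)) (Measurable.stronglyMeasurable ?_)
  exact (H.measurable.comp (measurable_fst.fst.prodMk measurable_snd)).mul
    ((hw.comp (measurable_snd.prodMk measurable_fst.snd)).sub
      (hw.comp (measurable_fst.fst.prodMk measurable_fst.snd)))

theorem integral_abs_nonlocalOp_le (H : IsNonlocalKernel μ Ω F' K M) (hf : Measurable f)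
    (hfΩ : IntegrableOn f Ω μ) (hC : 0 ≤ C) (hoff : ∀ x ∉ Ω, |f x| ≤ C) :
    IntegrableOn (nonlocalOp μ K f) Ω μ ∧ ∫ x in Ω, |nonlocalOp μ K f x| ∂μ ≤
      M * (μ.real Ω * (∫ x in Ω, |f x| ∂μ + C * μ.real F') + μ.real F' * ∫ x in Ω, |f x| ∂μ) := by
  obtain ⟨hfF', hA⟩ := integrableOn_and_integral_abs_le_of_abs_le_compl H.measurableSet_left
    H.measure_right_lt_top hf hfΩ hC hoff
  set A := ∫ y in F', |f y| ∂μ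
  have hmeas : StronglyMeasurable (nonlocalOp μ K f) :=
    (H.stronglyMeasurable_nonlocalOp (w := fun y _ => f y) (hf.comp measurable_fst)).comp_measurable
      (measurable_id.prodMk (measurable_const (a := (0 : ℝ))))
  have hdom : IntegrableOn (fun x => M * A + M * μ.real F' * |f x|) Ω μ :=
    (integrableOn_const H.measure_left_lt_top.ne).add (hfΩ.abs.const_mul _)
  have hpt : ∀ x, |nonlocalOp μ K f x| ≤ M * A + M * μ.real F' * |f x| := fun x => by
    linarith [H.abs_nonlocalOp_le hfF' x]
  have hint : IntegrableOn (nonlocalOp μ K f) Ω μ :=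
    hdom.mono' hmeas.aestronglyMeasurable (ae_of_all _ hpt)
  refine ⟨hint, ?_⟩
  calc ∫ x in Ω, |nonlocalOp μ K f x| ∂μ ≤ ∫ x in Ω, (M * A + M * μ.real F' * |f x|) ∂μ :=
        integral_mono hint.abs hdom hpt
    _ = M * (μ.real Ω * A + μ.real F' * ∫ x in Ω, |f x| ∂μ) := by
        rw [integral_add (integrableOn_const (C := M * A) H.measure_left_lt_top.ne)
            (hfΩ.abs.const_mul _),
          setIntegral_const, integral_const_mul, smul_eq_mul]
        ring
    _ ≤ _ := by
        have := H.bound_nonneg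
        have : 0 ≤ μ.real Ω := measureReal_nonneg
        gcongr

theorem integrableOn_slice_right (H : IsNonlocalKernel μ Ω F' K M) (hw : SliceBound μ Ω t₀ C S w)
    {t : ℝ} (ht : t ∈ Icc 0 t₀) : IntegrableOn (w · t) F' μ :=
  (integrableOn_and_integral_abs_le_of_abs_le_compl H.measurableSet_left H.measure_right_lt_top
    (hw.measurable_slice t) (hw.integrableOn t ht)
    hw.nonneg fun x hx => hw.abs_le_of_notMem x hx t ht).1

theorem integral_abs_nonlocalOp_slice_le (H : IsNonlocalKernel μ Ω F' K M)
    (hw : SliceBound μ Ω t₀ C S w) {t : ℝ} (ht : t ∈ Icc 0 t₀) :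
    Integrable (fun x => nonlocalOp μ K (w · t) x) (μ.restrict Ω) ∧
      ∫ x in Ω, |nonlocalOp μ K (w · t) x| ∂μ ≤
        M * (μ.real Ω * (S + C * μ.real F') + μ.real F' * S) := by
  obtain ⟨hint, hle⟩ := H.integral_abs_nonlocalOp_le
    (hw.measurable_slice t) (hw.integrableOn t ht)
    hw.nonneg fun x hx => hw.abs_le_of_notMem x hx t ht
  refine ⟨hint, hle.trans ?_⟩
  have := hw.integral_abs_le t ht
  have := H.bound_nonneg
  have : (0 : ℝ) ≤ μ.real Ω := measureReal_nonneg
  have : (0 : ℝ) ≤ μ.real F' := measureReal_nonneg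
  gcongr

theorem integral_abs_intervalIntegral_nonlocalOp_le (H : IsNonlocalKernel μ Ω F' K M)
    (hw : SliceBound μ Ω t₀ C S w) {a b : ℝ} (ha : 0 ≤ a) (hab : a ≤ b) (hb : b ≤ t₀) :
    IntegrableOn (fun x => ∫ r in a..b, nonlocalOp μ K (w · r) x) Ω μ ∧
      ∫ x in Ω, |∫ r in a..b, nonlocalOp μ K (w · r) x| ∂μ ≤
        (b - a) * (M * (μ.real Ω * (S + C * μ.real F') + μ.real F' * S)) := by
  have : IsFiniteMeasure (μ.restrict Ω) :=
    isFiniteMeasure_restrict.2 H.measure_left_lt_top.ne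
  have hIoc : ∀ r ∈ Ioc a b, r ∈ Icc 0 t₀ := fun r hr => ⟨ha.trans hr.1.le, hr.2.trans hb⟩
  exact integral_abs_intervalIntegral_le (H.stronglyMeasurable_nonlocalOp hw.measurable).measurable
    hab (fun r hr => (H.integral_abs_nonlocalOp_slice_le hw (hIoc r hr)).1)
    (fun r hr => (H.integral_abs_nonlocalOp_slice_le hw (hIoc r hr)).2)

theorem ae_intervalIntegrable_nonlocalOp (H : IsNonlocalKernel μ Ω F' K M)
    (hw : SliceBound μ Ω t₀ C S w) (ht₀ : 0 ≤ t₀) :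
    ∀ᵐ x ∂μ.restrict Ω, ∀ a ∈ Icc 0 t₀, ∀ b ∈ Icc 0 t₀,
      IntervalIntegrable (fun r => nonlocalOp μ K (w · r) x) volume a b := by
  have : IsFiniteMeasure (μ.restrict Ω) :=
    isFiniteMeasure_restrict.2 H.measure_left_lt_top.ne
  filter_upwards [ae_integrableOn_of_integral_abs_le
    (H.stronglyMeasurable_nonlocalOp hw.measurable).measurable
    (fun r hr => (H.integral_abs_nonlocalOp_slice_le hw (Ioc_subset_Icc_self hr)).1)
    (fun r hr => (H.integral_abs_nonlocalOp_slice_le hw (Ioc_subset_Icc_self hr)).2)]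
    with x hx a ha b hb
  exact ((intervalIntegrable_iff_integrableOn_Ioc_of_le ht₀).2 hx).mono_set
    (uIcc_subset_uIcc (by simpa [uIcc_of_le ht₀] using ha) (by simpa [uIcc_of_le ht₀] using hb))

theorem measurable_nonlocalT (H : IsNonlocalKernel μ Ω F' K M) (hg : Measurable (uncurry g))
    (hw : Measurable (uncurry w)) : Measurable (uncurry (nonlocalT μ Ω K g w)) :=
  Measurable.ite (measurable_fst H.measurableSet_left)
    ((hw.comp (measurable_fst.prodMk measurable_const)).add
      ((H.stronglyMeasurable_nonlocalOp hw).measurable.intervalIntegral_uncurry 0)) hg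

theorem integral_abs_nonlocalT_sub_le (H : IsNonlocalKernel μ Ω F' K M)
    (hw : SliceBound μ Ω t₀ C S w) {s t : ℝ} (hs : 0 ≤ s) (hst : s ≤ t) (ht : t ≤ t₀) :
    ∫ x in Ω, |nonlocalT μ Ω K g w x t - nonlocalT μ Ω K g w x s| ∂μ ≤
      (t - s) * (M * (μ.real Ω * (S + C * μ.real F') + μ.real F' * S)) := by
  have hae : (fun x => |nonlocalT μ Ω K g w x t - nonlocalT μ Ω K g w x s|)
      =ᵐ[μ.restrict Ω] fun x => |∫ r in s..t, nonlocalOp μ K (w · r) x| := by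
    filter_upwards [ae_restrict_mem H.measurableSet_left,
      H.ae_intervalIntegrable_nonlocalOp hw (hs.trans (hst.trans ht))] with x hx hint
    have h0 : (0 : ℝ) ∈ Icc 0 t₀ := ⟨le_rfl, hs.trans (hst.trans ht)⟩
    rw [nonlocalT_of_mem hx, nonlocalT_of_mem hx, add_sub_add_left_eq_sub,
      intervalIntegral.integral_interval_sub_left (hint 0 h0 t ⟨hs.trans hst, ht⟩)
        (hint 0 h0 s ⟨hs, hst.trans ht⟩)]
  rw [integral_congr_ae hae]
  exact (H.integral_abs_intervalIntegral_nonlocalOp_le hw hs hst ht).2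

theorem memX_nonlocalT (H : IsNonlocalKernel μ Ω F' K M) (hg : Measurable (uncurry g))
    (hC : 0 ≤ C) (hgC : ∀ x t, |g x t| ≤ C) (hw : MemX μ Ω g t₀ w) :
    MemX μ Ω g t₀ (nonlocalT μ Ω K g w) := by
  have hb := hw.sliceBound hC hgC
  set B := M * (μ.real Ω * (tripleNorm μ Ω t₀ w + C * μ.real F') +
    μ.real F' * tripleNorm μ Ω t₀ w)
  have hlip : ∀ s ∈ Icc 0 t₀, ∀ t ∈ Icc 0 t₀,
      ∫ x in Ω, |nonlocalT μ Ω K g w x t - nonlocalT μ Ω K g w x s| ∂μ ≤ |t - s| * B := by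
    intro s hs t ht
    rcases le_total s t with hst | hts
    · rw [abs_of_nonneg (sub_nonneg.2 hst)]
      exact H.integral_abs_nonlocalT_sub_le hb hs.1 hst ht.2
    · simp_rw [abs_sub_comm _ (nonlocalT μ Ω K g w _ s), abs_sub_comm t,
        abs_of_nonneg (sub_nonneg.2 hts)]
      exact H.integral_abs_nonlocalT_sub_le hb ht.1 hts hs.2
  refine ⟨H.measurable_nonlocalT hg hw.1, fun x hx t _ => if_neg hx, fun t ht => ?_,
    fun s hs => ?_⟩
  · refine IntegrableOn.congr_fun ((hw.l1ContinuousOn.1 0 ⟨le_rfl, ht.1.trans ht.2⟩).add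
      (H.integral_abs_intervalIntegral_nonlocalOp_le hb le_rfl ht.1 ht.2).1)
      (fun x hx => (nonlocalT_of_mem hx t).symm) H.measurableSet_left
  · have hlim : Tendsto (fun t => |t - s| * B) (𝓝[Icc 0 t₀] s) (𝓝 0) :=
      (((continuous_id.sub continuous_const).abs.mul continuous_const).tendsto' s 0
        (by simp)).mono_left nhdsWithin_le_nhds
    exact squeeze_zero' (Eventually.of_forall fun t => integral_nonneg fun _ => abs_nonneg _)
      (eventually_nhdsWithin_of_forall fun t ht => hlip s hs t ht) hlim

theorem memX0_nonlocalT (H : IsNonlocalKernel μ Ω F' K M)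
    (hg : Measurable (uncurry g)) (hC : 0 ≤ C) (hgC : ∀ x t, |g x t| ≤ C)
    (hw : MemX0 μ Ω g t₀ u₀ w) : MemX0 μ Ω g t₀ u₀ (nonlocalT μ Ω K g w) := by
  refine ⟨H.memX_nonlocalT hg hC hgC hw.1, EventuallyEq.trans ?_ hw.2⟩
  filter_upwards [ae_restrict_mem H.measurableSet_left] with x hx
  rw [nonlocalT_of_mem hx, intervalIntegral.integral_same, add_zero]

theorem integral_abs_nonlocalT_sub_nonlocalT_le (H : IsNonlocalKernel μ Ω F' K M)
    (hC : 0 ≤ C) (hgC : ∀ x t, |g x t| ≤ C) (hw : MemX0 μ Ω g t₀ u₀ w)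
    (hv : MemX0 μ Ω g t₀ u₀ v) {t : ℝ} (ht : t ∈ Icc 0 t₀) :
    ∫ x in Ω, |nonlocalT μ Ω K g w x t - nonlocalT μ Ω K g v x t| ∂μ ≤
      M * (μ.real Ω + μ.real F') * t₀ * tripleNorm μ Ω t₀ (fun x t => w x t - v x t) := by
  have hbw := hw.1.sliceBound hC hgC
  have hbv := hv.1.sliceBound hC hgC
  have hδ := hw.1.sliceBound_sub hv.1
  set N := tripleNorm μ Ω t₀ (fun x t => w x t - v x t)
  have ht₀ : 0 ≤ t₀ := ht.1.trans ht.2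
  have hsub : ∀ r ∈ uIcc 0 t, ∀ x, nonlocalOp μ K (w · r) x - nonlocalOp μ K (v · r) x =
      nonlocalOp μ K (fun y => w y r - v y r) x := fun r hr => by
    have hr' : r ∈ Icc 0 t₀ := by
      rw [uIcc_of_le ht.1] at hr
      exact ⟨hr.1, hr.2.trans ht.2⟩
    exact H.nonlocalOp_sub (hbw.measurable_slice r) (H.integrableOn_slice_right hbw hr')
      (hbv.measurable_slice r) (H.integrableOn_slice_right hbv hr')
  have hae : (fun x => |nonlocalT μ Ω K g w x t - nonlocalT μ Ω K g v x t|)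
      =ᵐ[μ.restrict Ω] fun x => |∫ r in 0..t, nonlocalOp μ K (fun y => w y r - v y r) x| := by
    filter_upwards [ae_restrict_mem H.measurableSet_left,
      H.ae_intervalIntegrable_nonlocalOp hbw ht₀, H.ae_intervalIntegrable_nonlocalOp hbv ht₀,
      hw.2, hv.2] with x hx hiw hiv hw0 hv0
    have h0 : (0 : ℝ) ∈ Icc 0 t₀ := ⟨le_rfl, ht₀⟩
    rw [nonlocalT_of_mem hx, nonlocalT_of_mem hx, hw0, hv0, add_sub_add_left_eq_sub,
      ← intervalIntegral.integral_sub (hiw 0 h0 t ht) (hiv 0 h0 t ht),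
      intervalIntegral.integral_congr fun r hr => hsub r hr x]
  rw [integral_congr_ae hae]
  have hN := (hw.1.l1ContinuousOn.sub hv.1.l1ContinuousOn).tripleNorm_nonneg ht₀
  have hM := H.bound_nonneg
  have : (0 : ℝ) ≤ μ.real Ω := measureReal_nonneg
  have : (0 : ℝ) ≤ μ.real F' := measureReal_nonneg
  calc _ ≤ (t - 0) * (M * (μ.real Ω * (N + 0 * μ.real F') + μ.real F' * N)) :=
        (H.integral_abs_intervalIntegral_nonlocalOp_le hδ le_rfl ht.1 ht.2).2
    _ = M * (μ.real Ω + μ.real F') * t * N := by ring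
    _ ≤ M * (μ.real Ω + μ.real F') * t₀ * N := by gcongr; exact ht.2

theorem tripleNorm_nonlocalT_sub_le (H : IsNonlocalKernel μ Ω F' K M)
    (hC : 0 ≤ C) (hgC : ∀ x t, |g x t| ≤ C) (ht₀ : 0 ≤ t₀) (hw : MemX0 μ Ω g t₀ u₀ w)
    (hv : MemX0 μ Ω g t₀ u₀ v) :
    tripleNorm μ Ω t₀ (fun x t => nonlocalT μ Ω K g w x t - nonlocalT μ Ω K g v x t) ≤
      M * (μ.real Ω + μ.real F') * t₀ * tripleNorm μ Ω t₀ (fun x t => w x t - v x t) :=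
  tripleNorm_le ht₀ fun _ ht => H.integral_abs_nonlocalT_sub_nonlocalT_le hC hgC hw hv ht

theorem ae_eq_nonlocalT_of_tendsto (H : IsNonlocalKernel μ Ω F' K M)
    (hg : Measurable (uncurry g)) (hC : 0 ≤ C) (hgC : ∀ x t, |g x t| ≤ C)
    {ws : ℕ → G → ℝ → ℝ} (hws : ∀ n, MemX0 μ Ω g t₀ u₀ (ws n))
    (hsucc : ∀ n, ws (n + 1) = nonlocalT μ Ω K g (ws n)) {u : G → ℝ → ℝ}
    (hu : MemX0 μ Ω g t₀ u₀ u) {τ : ℕ → ℝ} (hτ : Tendsto τ atTop (𝓝 0))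
    (happrox : ∀ n, ∀ t ∈ Icc 0 t₀, ∫ x in Ω, |u x t - ws n x t| ∂μ ≤ τ n)
    {t : ℝ} (ht : t ∈ Icc 0 t₀) :
    (fun x => u x t) =ᵐ[μ.restrict Ω] fun x => nonlocalT μ Ω K g u x t := by
  set q := M * (μ.real Ω + μ.real F') * t₀
  have ht₀ : 0 ≤ t₀ := ht.1.trans ht.2
  have hq : 0 ≤ q := by have := H.bound_nonneg; positivity
  have hTu := H.memX0_nonlocalT hg hC hgC hu
  have hint := hu.1.l1ContinuousOn.1 t ht
  have hTint := hTu.1.l1ContinuousOn.1 t ht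
  have hle : ∀ n, ∫ x in Ω, |u x t - nonlocalT μ Ω K g u x t| ∂μ ≤ τ (n + 1) + q * τ n := by
    intro n
    have hstep : ∫ x in Ω, |ws (n + 1) x t - nonlocalT μ Ω K g u x t| ∂μ ≤ q * τ n := by
      rw [hsucc n]
      refine (H.integral_abs_nonlocalT_sub_nonlocalT_le hC hgC (hws n) hu ht).trans ?_
      exact mul_le_mul_of_nonneg_left (tripleNorm_le ht₀ fun s hs => by
        simpa only [abs_sub_comm] using happrox n s hs) hq
    linarith [integral_abs_sub_le_add hint ((hws (n + 1)).1.l1ContinuousOn.1 t ht) hTint,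
      happrox (n + 1) t ht]
  have hlim : Tendsto (fun n => τ (n + 1) + q * τ n) atTop (𝓝 0) := by
    simpa using (hτ.comp (tendsto_add_atTop_nat 1)).add (hτ.const_mul q)
  exact ae_eq_of_integral_abs_sub_nonpos hint hTint (ge_of_tendsto' hlim hle)

theorem exists_fixedPoint (H : IsNonlocalKernel μ Ω F' K M) (hg : Measurable (uncurry g))
    (hC : 0 ≤ C) (hgC : ∀ x t, |g x t| ≤ C) (hu₀ : IntegrableOn u₀ Ω μ) (ht₀ : 0 ≤ t₀)
    (hq : M * (μ.real Ω + μ.real F') * t₀ < 1) :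
    ∃ u, MemX0 μ Ω g t₀ u₀ u ∧ ∀ t ∈ Icc 0 t₀,
      (fun x => u x t) =ᵐ[μ.restrict Ω] fun x => nonlocalT μ Ω K g u x t := by
  set q := M * (μ.real Ω + μ.real F') * t₀
  have hq0 : 0 ≤ q := by have := H.bound_nonneg; positivity
  obtain ⟨w₀, hw₀⟩ := exists_memX0 (t₀ := t₀) H.measurableSet_left hg hu₀
  set ws : ℕ → G → ℝ → ℝ := fun n => (nonlocalT μ Ω K g)^[n] w₀
  have hsucc : ∀ n, ws (n + 1) = nonlocalT μ Ω K g (ws n) := fun n =>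
    Function.iterate_succ_apply' _ _ _
  have hws : ∀ n, MemX0 μ Ω g t₀ u₀ (ws n) := fun n => by
    induction n with
    | zero => exact hw₀
    | succ n ih => exact hsucc n ▸ H.memX0_nonlocalT hg hC hgC ih
  set D := tripleNorm μ Ω t₀ fun x t => ws 1 x t - ws 0 x t
  have hgeom : ∀ n, tripleNorm μ Ω t₀ (fun x t => ws (n + 1) x t - ws n x t) ≤ q ^ n * D :=
    fun n => by
    induction n with
    | zero => simp [D]
    | succ n ih =>
      have h := H.tripleNorm_nonlocalT_sub_le hC hgC ht₀ (hws (n + 1)) (hws n)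
      rw [← hsucc (n + 1), ← hsucc n] at h
      calc _ ≤ q * tripleNorm μ Ω t₀ (fun x t => ws (n + 1) x t - ws n x t) := h
        _ ≤ q * (q ^ n * D) := mul_le_mul_of_nonneg_left ih hq0
        _ = q ^ (n + 1) * D := by ring
  obtain ⟨u, hu, τ, hτ, happrox⟩ := exists_memX0_tendsto_of_geometric H.measurableSet_left hg
    hu₀ ht₀ hws hq0 hq (((hws 1).1.l1ContinuousOn.sub (hws 0).1.l1ContinuousOn).tripleNorm_nonneg
      ht₀) fun n t ht => (((hws (n + 1)).1.l1ContinuousOn.sub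
        (hws n).1.l1ContinuousOn).integral_abs_le_tripleNorm ht).trans (hgeom n)
  exact ⟨u, hu, fun t ht => H.ae_eq_nonlocalT_of_tendsto hg hC hgC hws hsucc hu hτ happrox ht⟩

theorem ae_eq_of_fixedPoint (H : IsNonlocalKernel μ Ω F' K M) (hC : 0 ≤ C)
    (hgC : ∀ x t, |g x t| ≤ C) (hq : M * (μ.real Ω + μ.real F') * t₀ < 1) {u v : G → ℝ → ℝ}
    (hu : MemX0 μ Ω g t₀ u₀ u) (hv : MemX0 μ Ω g t₀ u₀ v)
    (hfu : ∀ t ∈ Icc 0 t₀,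
      (fun x => u x t) =ᵐ[μ.restrict Ω] fun x => nonlocalT μ Ω K g u x t)
    (hfv : ∀ t ∈ Icc 0 t₀,
      (fun x => v x t) =ᵐ[μ.restrict Ω] fun x => nonlocalT μ Ω K g v x t)
    {t : ℝ} (ht : t ∈ Icc 0 t₀) : (fun x => u x t) =ᵐ[μ.restrict Ω] fun x => v x t := by
  have ht₀ : 0 ≤ t₀ := ht.1.trans ht.2
  have huv := hu.1.l1ContinuousOn.sub hv.1.l1ContinuousOn
  set N := tripleNorm μ Ω t₀ fun x t => u x t - v x t
  have hN : N ≤ M * (μ.real Ω + μ.real F') * t₀ * N := tripleNorm_le ht₀ fun s hs => by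
    have hae : (fun x => |u x s - v x s|) =ᵐ[μ.restrict Ω]
        fun x => |nonlocalT μ Ω K g u x s - nonlocalT μ Ω K g v x s| := by
      filter_upwards [hfu s hs, hfv s hs] with x hux hvx
      rw [hux, hvx]
    rw [integral_congr_ae hae]
    exact H.integral_abs_nonlocalT_sub_nonlocalT_le hC hgC hu hv hs
  have hN0 : N ≤ 0 := by nlinarith [huv.tripleNorm_nonneg ht₀]
  exact ae_eq_of_integral_abs_sub_nonpos (hu.1.l1ContinuousOn.1 t ht)
    (hv.1.l1ContinuousOn.1 t ht) ((huv.integral_abs_le_tripleNorm ht).trans hN0)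

end IsNonlocalKernel

end NonlocalProblem

/-- If `M(μ(Ω)+μ(F′)) t₀ < 1` then `𝔗` maps `X_{t₀,u₀}` into itself, is a strict
contraction there (with contraction constant `M(μ(Ω)+μ(F′)) t₀` for `|||·|||`),
and hence has a unique fixed point in `X_{t₀,u₀}`. -/
theorem stmt1 {G : Type*} [MeasurableSpace G] (μ : Measure G) (Ω F' : Set G)
    (hΩm : MeasurableSet Ω) (hF'm : MeasurableSet F')
    (hΩfin : μ Ω < ⊤) (hF'fin : μ F' < ⊤)
    (K : G → G → ℝ) (hKmeas : Measurable (fun p : G × G => K p.1 p.2))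
    (hKnonneg : ∀ x y, 0 ≤ K x y)
    (hKsupp : ∀ x y, (x, y) ∉ Ω ×ˢ F' → K x y = 0)
    (M : ℝ) (hM : 0 < M) (hKle : ∀ x y, K x y ≤ M)
    (g : G → ℝ → ℝ) (hgmeas : Measurable (fun p : G × ℝ => g p.1 p.2))
    (hgbdd : ∃ C, ∀ x t, |g x t| ≤ C)
    (u₀ : G → ℝ) (hu₀ : IntegrableOn u₀ Ω μ)
    (t₀ : ℝ) (ht₀ : 0 < t₀)
    (hsmall : M * ((μ Ω).toReal + (μ F').toReal) * t₀ < 1) :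
    (∀ w, MemX0 μ Ω g t₀ u₀ w → MemX0 μ Ω g t₀ u₀ (nonlocalT μ Ω K g w)) ∧
    (∀ w v, MemX0 μ Ω g t₀ u₀ w → MemX0 μ Ω g t₀ u₀ v →
      tripleNorm μ Ω t₀
          (fun x t => nonlocalT μ Ω K g w x t - nonlocalT μ Ω K g v x t) ≤
        M * ((μ Ω).toReal + (μ F').toReal) * t₀ *
          tripleNorm μ Ω t₀ (fun x t => w x t - v x t)) ∧
    (∃ u, MemX0 μ Ω g t₀ u₀ u ∧
      (∀ t ∈ Icc (0:ℝ) t₀,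
        (fun x => u x t) =ᵐ[μ.restrict Ω] fun x => nonlocalT μ Ω K g u x t) ∧
      (∀ u', MemX0 μ Ω g t₀ u₀ u' →
        (∀ t ∈ Icc (0:ℝ) t₀,
          (fun x => u' x t) =ᵐ[μ.restrict Ω] fun x => nonlocalT μ Ω K g u' x t) →
        ∀ t ∈ Icc (0:ℝ) t₀, (fun x => u' x t) =ᵐ[μ.restrict Ω] fun x => u x t)) := by
  obtain ⟨C₀, hC₀⟩ := hgbdd
  set C := max C₀ 0
  have hC : 0 ≤ C := le_max_right _ _
  have hgC : ∀ x t, |g x t| ≤ C := fun x t => (hC₀ x t).trans (le_max_left _ _)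
  have H : IsNonlocalKernel μ Ω F' K M :=
    ⟨hΩm, hF'm, hΩfin, hF'fin, hKmeas, hKnonneg, hKle, hM.le, hKsupp⟩
  obtain ⟨u, hu, hfix⟩ := H.exists_fixedPoint hgmeas hC hgC hu₀ ht₀.le hsmall
  exact ⟨fun w hw => H.memX0_nonlocalT hgmeas hC hgC hw,
    fun w v hw hv => H.tripleNorm_nonlocalT_sub_le hC hgC ht₀.le hw hv,
    u, hu, hfix, fun u' hu' hfix' t ht => H.ae_eq_of_fixedPoint hC hgC hsmall hu' hu hfix' hfix ht⟩
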